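/- arXiv:2409.00709 — 2 statements merged into one kernel-verified Lean document; each statement's English description precedes it below -/
import Mathlib

section
/- Let β ⊆ α be compositions with N = |α|−|β| ≥ 1, let 1 ≤ b ≤ a ≤ N−1, and let S, T ∈ SIT(α/β) with S ≠ T. Suppose T = π_a^{rdI} π_{a−1}^{rdI} ⋯ π_{b+1}^{rdI} π_b^{rdI}(S), and that for each i = b, b+1, …, a, setting T_{b−1} = S and T_i = π_i^{rdI}(T_{i−1}), we have T_i ∈ SIT(α/β) and T_i ≠ T_{i−1}. Then T is obtained from S by replacing the entries b, b+1, b+2, …, a, a+1 by a+1, b, b+1, …, a−1, a respectively: the cell of S containing b contains a+1 in T, and for each c with b ≤ c ≤ a, the cell of S containing c+1 contains c in T; all other cells are unchanged. -/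
open scoped Classical

namespace ImmaculateSkew

/-- `part α i` is the `i`-th part (0-indexed) of the composition `α`, or `0` if out of range. -/
def part (α : List ℕ) (i : ℕ) : ℕ := α.getD i 0

/-- a composition: a list of positive integers -/
def IsComposition (α : List ℕ) : Prop := ∀ x ∈ α, 0 < x

/-- `β ⊆ α` for compositions -/
def SubComp (β α : List ℕ) : Prop :=
  β.length ≤ α.length ∧ ∀ j < β.length, part β j ≤ part α j

/-- cell `(i, j)` (row `i` from the bottom, column `j`, both 0-indexed) lies in the diagram of `α` -/
def InDiagram (α : List ℕ) (c : ℕ × ℕ) : Prop :=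
  c.1 < α.length ∧ c.2 < part α c.1

/-- cell lies in the skew diagram `α/β` -/
def InSkew (α β : List ℕ) (c : ℕ × ℕ) : Prop :=
  InDiagram α c ∧ ¬ InDiagram β c

/-- the finite set of cells of the skew diagram `α/β` -/
noncomputable def skewCells (α β : List ℕ) : Finset (ℕ × ℕ) :=
  (Finset.range α.length ×ˢ Finset.range (α.sum + 1)).filter (InSkew α β)

/-- `N = |α| - |β|` -/
def skewSize (α β : List ℕ) : ℕ := α.sum - β.sum

/-- a filling of the cells of `α/β` using each entry of `E` exactly once, zero off the diagram -/
structure IsStdOn (α β : List ℕ) (E : Finset ℕ) (T : ℕ × ℕ → ℕ) : Prop where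
  zero_off : ∀ c, ¬ InSkew α β c → T c = 0
  mem : ∀ c, InSkew α β c → T c ∈ E
  inj : ∀ c c', InSkew α β c → InSkew α β c' → T c = T c' → c = c'
  surj : ∀ v ∈ E, ∃ c, InSkew α β c ∧ T c = v

/-- row entries strictly increase left to right -/
def RowsStrict (α β : List ℕ) (T : ℕ × ℕ → ℕ) : Prop :=
  ∀ i j j', j < j' → InSkew α β (i, j) → InSkew α β (i, j') → T (i, j) < T (i, j')

/-- row entries weakly increase left to right -/
def RowsWeak (α β : List ℕ) (T : ℕ × ℕ → ℕ) : Prop :=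
  ∀ i j j', j < j' → InSkew α β (i, j) → InSkew α β (i, j') → T (i, j) ≤ T (i, j')

/-- all column entries strictly increase bottom to top -/
def ColsStrict (α β : List ℕ) (T : ℕ × ℕ → ℕ) : Prop :=
  ∀ i i' j, i < i' → InSkew α β (i, j) → InSkew α β (i', j) → T (i, j) < T (i', j)

/-- all column entries weakly increase bottom to top -/
def ColsWeak (α β : List ℕ) (T : ℕ × ℕ → ℕ) : Prop :=
  ∀ i i' j, i < i' → InSkew α β (i, j) → InSkew α β (i', j) → T (i, j) ≤ T (i', j)

/-- the column-1 entries (those in `α/β`) strictly increase bottom to top -/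
def FirstColStrict (α β : List ℕ) (T : ℕ × ℕ → ℕ) : Prop :=
  ∀ i i', i < i' → InSkew α β (i, 0) → InSkew α β (i', 0) → T (i, 0) < T (i', 0)

/-- the column-1 entries (those in `α/β`) weakly increase bottom to top -/
def FirstColWeak (α β : List ℕ) (T : ℕ × ℕ → ℕ) : Prop :=
  ∀ i i', i < i' → InSkew α β (i, 0) → InSkew α β (i', 0) → T (i, 0) ≤ T (i', 0)

/-- standard immaculate tableau of shape `α/β` with entry set `E` -/
def IsSITOn (α β : List ℕ) (E : Finset ℕ) (T : ℕ × ℕ → ℕ) : Prop :=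
  IsStdOn α β E T ∧ RowsStrict α β T ∧ FirstColStrict α β T

/-- standard immaculate tableau of shape `α/β` (entries `1, …, N`) -/
def IsSIT (α β : List ℕ) (T : ℕ × ℕ → ℕ) : Prop :=
  IsSITOn α β (Finset.Icc 1 (skewSize α β)) T

/-- standard extended tableau: all columns increase bottom to top -/
def IsSET (α β : List ℕ) (T : ℕ × ℕ → ℕ) : Prop :=
  IsSIT α β T ∧ ColsStrict α β T

/-- the four descent-set variants -/
inductive Variant | dI | rdI | Astar | Abar

/-- `rowRel a r r'`: the relation required between the row `r` containing `i` and the row `r'`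
containing `i+1` for `i` to be an `a`-descent -/
def rowRel : Variant → ℕ → ℕ → Prop
  | .dI    => fun r r' => r < r'
  | .rdI   => fun r r' => r' ≤ r
  | .Astar => fun r r' => r' < r
  | .Abar  => fun r r' => r ≤ r'

/-- the `a`-descent set of a tableau -/
noncomputable def Des (a : Variant) (α β : List ℕ) (T : ℕ × ℕ → ℕ) : Finset ℕ :=
  (Finset.Icc 1 (skewSize α β - 1)).filter fun k =>
    ∃ c c', InSkew α β c ∧ InSkew α β c' ∧ T c = k ∧ T c' = k + 1 ∧ rowRel a c.1 c'.1

/-- interchange the entries `i` and `i+1` -/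
def swapEntries (i : ℕ) (T : ℕ × ℕ → ℕ) : ℕ × ℕ → ℕ :=
  fun c => if T c = i then i + 1 else if T c = i + 1 then i else T c

/-- the 0-Hecke operator `π_i^a` on `SIT(α/β) ∪ {0}` (the zero function plays the role of `0`) -/
noncomputable def piOp (a : Variant) (α β : List ℕ) (i : ℕ) (T : ℕ × ℕ → ℕ) : ℕ × ℕ → ℕ :=
  if i ∈ Des a α β T then
    (if IsSIT α β (swapEntries i T) then swapEntries i T else fun _ => 0)
  else T

/-- the fundamental quasisymmetric function `F_{comp(D)}` for `D ⊆ {1,…,N-1}`, as a power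
series in the variables `x_1, x_2, …` (variable `x_n` is `X n`; `x_0` is unused) -/
noncomputable def Fund (N : ℕ) (D : Finset ℕ) : MvPowerSeries ℕ ℚ :=
  fun d => (Nat.card {f : Fin N → ℕ //
    (∀ j, 1 ≤ f j) ∧
    (∀ j k : Fin N, j ≤ k → f j ≤ f k) ∧
    (∀ (j : ℕ) (_ : 1 ≤ j) (h2 : j < N), j ∈ D → f ⟨j - 1, by omega⟩ < f ⟨j, h2⟩) ∧
    (∑ j, Finsupp.single (f j) 1) = d} : ℚ)

/-- the generating function `Σ_T x^T` over all fillings of the given cells with positive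
integers satisfying the predicate `P` (and equal to `0` off the given cells) -/
noncomputable def genF (cs : Finset (ℕ × ℕ)) (P : (ℕ × ℕ → ℕ) → Prop) :
    MvPowerSeries ℕ ℚ :=
  fun d => (Nat.card {T : ℕ × ℕ → ℕ //
    (∀ c, c ∉ cs → T c = 0) ∧ (∀ c ∈ cs, 1 ≤ T c) ∧ P T ∧
    (∑ c ∈ cs, Finsupp.single (T c) 1) = d} : ℚ)

/-- complete homogeneous symmetric function `h_r` -/
noncomputable def hFun (r : ℕ) : MvPowerSeries ℕ ℚ :=
  fun d => (Nat.card {f : Fin r → ℕ //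
    (∀ j, 1 ≤ f j) ∧ (∀ j k : Fin r, j ≤ k → f j ≤ f k) ∧
    (∑ j, Finsupp.single (f j) 1) = d} : ℚ)

/-- elementary symmetric function `e_r` -/
noncomputable def eFun (r : ℕ) : MvPowerSeries ℕ ℚ :=
  fun d => (Nat.card {f : Fin r → ℕ //
    (∀ j, 1 ≤ f j) ∧ (∀ j k : Fin r, j < k → f j < f k) ∧
    (∑ j, Finsupp.single (f j) 1) = d} : ℚ)

/-- send a filling to the corresponding basis vector of the free `ℚ`-vector space on
`SIT(α/β)`, or to the zero vector if it is not a standard immaculate tableau -/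
noncomputable def toBasis (α β : List ℕ) (U : ℕ × ℕ → ℕ) :
    ({T : ℕ × ℕ → ℕ // IsSIT α β T} →₀ ℚ) :=
  if h : IsSIT α β U then Finsupp.single ⟨U, h⟩ 1 else 0

/-- the linear extension of `π_i^a` to the free `ℚ`-vector space on `SIT(α/β)` -/
noncomputable def piLin (a : Variant) (α β : List ℕ) (i : ℕ) :
    ({T : ℕ × ℕ → ℕ // IsSIT α β T} →₀ ℚ) →ₗ[ℚ]
      ({T : ℕ × ℕ → ℕ // IsSIT α β T} →₀ ℚ) :=
  Finsupp.lift _ ℚ _ (fun T => toBasis α β (piOp a α β i T.1))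

/-- one step: the tableau `T` is obtained from `S` by applying one operator `π_i^a` -/
def stepRel (a : Variant) (α β : List ℕ) (S T : ℕ × ℕ → ℕ) : Prop :=
  IsSIT α β T ∧ ∃ i, 1 ≤ i ∧ i ≤ skewSize α β - 1 ∧ piOp a α β i S = T

/-- `T` is obtained from `S` by applying a (possibly empty) sequence of operators `π_i^a`,
all intermediate results being tableaux -/
def reach (a : Variant) (α β : List ℕ) : (ℕ × ℕ → ℕ) → (ℕ × ℕ → ℕ) → Prop :=
  Relation.ReflTransGen (stepRel a α β)

/-- the number of skew cells of `α/β` strictly above row `i` other than column-1 cells -/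
noncomputable def aboveCount (α β : List ℕ) (i : ℕ) : ℕ :=
  ∑ i' ∈ Finset.Ico (i + 1) α.length,
    (if i' < β.length then part α i' - part β i' else part α i' - 1)

/-- the tableau `S^0_{α/β}`: the column-1 cells of `α/β` are filled with `1, …, ℓ(α)-ℓ(β)`
bottom to top, then the remaining cells are filled row by row, top to bottom, left to right,
with consecutive integers -/
noncomputable def S0 (α β : List ℕ) : ℕ × ℕ → ℕ :=
  fun c =>
    if InSkew α β c then
      if c.2 = 0 ∧ β.length ≤ c.1 then c.1 - β.length + 1
      else (α.length - β.length) + aboveCount α β c.1 +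
        (if c.1 < β.length then c.2 - part β c.1 + 1 else c.2)
    else 0

/-- the row superstandard tableau `S^{row}_{α/β}`: rows filled left to right with `1, 2, …, N`,
bottom row first -/
noncomputable def Srow (α β : List ℕ) : ℕ × ℕ → ℕ :=
  fun c =>
    if InSkew α β c then
      (∑ i' ∈ Finset.range c.1, (part α i' - part β i')) + (c.2 - part β c.1 + 1)
    else 0

/-- `c` is read before `c'` in the reading word (rows top to bottom, right to left in a row) -/
def readBefore (c c' : ℕ × ℕ) : Prop :=
  c'.1 < c.1 ∨ (c.1 = c'.1 ∧ c'.2 < c.2)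

/-- the number of inversions of the reading word of a tableau of shape `α/β` -/
noncomputable def invNum (α β : List ℕ) (T : ℕ × ℕ → ℕ) : ℕ :=
  ((skewCells α β ×ˢ skewCells α β).filter
    (fun p => readBefore p.1 p.2 ∧ T p.2 < T p.1)).card

/-- `φ_U(T)`: fill the cells of `β` by `U` and those of `α/β` by `T` with all entries of `T`
shifted up by `m = |β|` -/
noncomputable def phiU (α β : List ℕ) (U T : ℕ × ℕ → ℕ) : ℕ × ℕ → ℕ :=
  fun c => if InDiagram β c then U c else if InSkew α β c then T c + β.sum else 0

/-- restriction `T_{≤ m}` of `T` to entries `≤ m` -/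
def restrLe (m : ℕ) (T : ℕ × ℕ → ℕ) : ℕ × ℕ → ℕ :=
  fun c => if T c ≤ m then T c else 0

/-- restriction `T_{> m}` of `T` to entries `> m` -/
def restrGt (m : ℕ) (T : ℕ × ℕ → ℕ) : ℕ × ℕ → ℕ :=
  fun c => if m < T c then T c else 0

/-- standardisation `std(T_{>m})`: keep the entries `> m` and subtract `m` from each -/
def stdGt (m : ℕ) (T : ℕ × ℕ → ℕ) : ℕ × ℕ → ℕ :=
  fun c => if m < T c then T c - m else 0

/-- `T ∈ X_{α,β}`: `T ∈ SIT(α)` and the entries `> |β|` of `T` occupy exactly the cells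
of `α/β` -/
def memX (α β : List ℕ) (T : ℕ × ℕ → ℕ) : Prop :=
  IsSIT α [] T ∧ ∀ c, InDiagram α c → (β.sum < T c ↔ ¬ InDiagram β c)

/-- A nontrivial application of `π_i` that yields a tableau must be the swap `s_i`. -/
lemma piOp_eq_swap (α β : List ℕ) (hN : 1 ≤ skewSize α β) (i : ℕ) (U V : ℕ × ℕ → ℕ)
    (hV : piOp .rdI α β i U = V) (hne : V ≠ U) (hsit : IsSIT α β V) :
    V = swapEntries i U := by
  unfold piOp at hV
  split_ifs at hV with h1 h2
  · exact hV.symm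
  · exfalso
    obtain ⟨c, _, hc1⟩ := hsit.1.surj 1 (Finset.mem_Icc.mpr ⟨le_refl 1, hN⟩)
    rw [← hV] at hc1
    exact one_ne_zero hc1.symm
  · exact absurd hV.symm hne

/-- if `T` is obtained from `S` by the sequence `π_a π_{a-1} ⋯ π_b` of
`rdI`-operators, each step producing a new tableau, then `T` is obtained from `S` by
replacing the entries `b, b+1, …, a, a+1` by `a+1, b, b+1, …, a` respectively. -/
theorem skew_consecutive_generators (α β : List ℕ)
    (hα : IsComposition α) (hβ : IsComposition β) (hsub : SubComp β α)
    (hN : 1 ≤ skewSize α β) (a b : ℕ) (hb : 1 ≤ b) (hba : b ≤ a)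
    (ha : a ≤ skewSize α β - 1) (S T : ℕ × ℕ → ℕ)
    (hS : IsSIT α β S) (hT : IsSIT α β T) (hST : S ≠ T)
    (Ts : ℕ → ℕ × ℕ → ℕ) (h0 : Ts (b - 1) = S) (hTa : Ts a = T)
    (hstep : ∀ i, b ≤ i → i ≤ a →
      Ts i = piOp .rdI α β i (Ts (i - 1)) ∧ IsSIT α β (Ts i) ∧ Ts i ≠ Ts (i - 1)) :
    ∀ c, T c =
      if S c = b then a + 1
      else if b + 1 ≤ S c ∧ S c ≤ a + 1 then S c - 1
      else S c := by
  have key : ∀ i, b ≤ i → i ≤ a → ∀ c, Ts i c =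
      if S c = b then i + 1
      else if b + 1 ≤ S c ∧ S c ≤ i + 1 then S c - 1
      else S c := by
    intro i hbi
    induction i, hbi using Nat.le_induction with
    | base =>
      intro _ c
      obtain ⟨heq, hsit, hne⟩ := hstep b le_rfl hba
      have hs := piOp_eq_swap α β hN b (Ts (b - 1)) (Ts b) heq.symm hne hsit
      rw [hs, h0, swapEntries]
      split_ifs <;> omega
    | succ i hbi ih =>
      intro hia c
      have hia' : i ≤ a := by omega
      obtain ⟨heq, hsit, hne⟩ := hstep (i + 1) (by omega) hia
      simp only [Nat.add_sub_cancel] at heq hne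
      have hs := piOp_eq_swap α β hN (i + 1) (Ts i) (Ts (i + 1)) heq.symm hne hsit
      rw [hs, swapEntries]
      simp only [ih hia' c]
      split_ifs <;> omega
  intro c
  rw [← hTa, key a hba le_rfl c]

end ImmaculateSkew
end

section
/- Let β ⊆ α be compositions with N = |α|−|β| ≥ 1. For every T ∈ SIT(α/β) with T ≠ S^0_{α/β}, there exist indices j_1, …, j_r (1 ≤ j_i ≤ N−1) and pairwise distinct tableaux T_0 = T, T_1, …, T_r = S^0_{α/β} in SIT(α/β) such that π_{j_i}^{rdI}(T_i) = T_{i−1} for i = 1, …, r; consequently T = π_{j_1}^{rdI} π_{j_2}^{rdI} ⋯ π_{j_r}^{rdI}(S^0_{α/β}). In particular, S^0_{α/β} is the unique minimal element of the partial order on SIT(α/β) in which S ⪯ T whenever T is obtained from S by applying a sequence of the operators π_i^{rdI}. -/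
open scoped Classical

namespace ImmaculateSkew

def rowlen (α β : List ℕ) (r : ℕ) : ℕ :=
  if r < β.length then part α r - part β r else part α r - 1

noncomputable def gsum (α β : List ℕ) (a : ℕ) : ℕ :=
  ∑ r ∈ Finset.Ico a α.length, rowlen α β r

lemma aboveCount_eq (α β : List ℕ) (i : ℕ) : aboveCount α β i = gsum α β (i + 1) := rfl

lemma gsum_of_ge (α β : List ℕ) {a : ℕ} (h : α.length ≤ a) : gsum α β a = 0 := by
  unfold gsum
  rw [Finset.Ico_eq_empty (by omega), Finset.sum_empty]

lemma gsum_succ (α β : List ℕ) {a : ℕ} (h : a < α.length) :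
    gsum α β a = rowlen α β a + gsum α β (a + 1) := by
  unfold gsum
  rw [Finset.sum_eq_sum_Ico_succ_bot h]

lemma gsum_le (α β : List ℕ) {a r : ℕ} (har : a ≤ r) (hr : r < α.length) :
    gsum α β (r + 1) + rowlen α β r ≤ gsum α β a := by
  have h1 : gsum α β r ≤ gsum α β a := by
    unfold gsum
    exact Finset.sum_le_sum_of_subset (Finset.Ico_subset_Ico har le_rfl)
  rw [gsum_succ α β hr] at h1
  omega

lemma part_pos (α : List ℕ) (hα : IsComposition α) {r : ℕ} (hr : r < α.length) :
    0 < part α r := by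
  rw [part, List.getD_eq_getElem α 0 hr]
  exact hα _ (List.getElem_mem hr)

lemma part_le_sum (α : List ℕ) {r : ℕ} (hr : r < α.length) : part α r ≤ α.sum := by
  rw [part, List.getD_eq_getElem α 0 hr]
  exact List.single_le_sum (fun x _ => Nat.zero_le x) _ (List.getElem_mem hr)

lemma part_eq_zero (α : List ℕ) {r : ℕ} (hr : α.length ≤ r) : part α r = 0 := by
  rw [part, List.getD_eq_default]
  simpa using hr

lemma list_sum_eq (α : List ℕ) : α.sum = ∑ r ∈ Finset.range α.length, part α r := by
  induction α with
  | nil => simp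
  | cons a l ih =>
      simp only [List.sum_cons, List.length_cons, Finset.sum_range_succ']
      rw [ih]
      simp [part, Nat.add_comm]

lemma mem_skew_iff (α β : List ℕ) (r j : ℕ) :
    InSkew α β (r, j) ↔ r < α.length ∧ j < part α r ∧ (β.length ≤ r ∨ part β r ≤ j) := by
  unfold InSkew InDiagram
  simp only []
  constructor
  · rintro ⟨⟨h1, h2⟩, h3⟩
    push_neg at h3
    refine ⟨h1, h2, ?_⟩
    by_cases h : r < β.length
    · exact Or.inr (h3 h)
    · exact Or.inl (by omega)
  · rintro ⟨h1, h2, h3⟩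
    refine ⟨⟨h1, h2⟩, ?_⟩
    rintro ⟨g1, g2⟩
    rcases h3 with h | h <;> omega

lemma mem_skewCells (α β : List ℕ) (c : ℕ × ℕ) :
    c ∈ skewCells α β ↔ InSkew α β c := by
  unfold skewCells
  rw [Finset.mem_filter, Finset.mem_product, Finset.mem_range, Finset.mem_range]
  constructor
  · exact fun h => h.2
  · intro h
    refine ⟨⟨h.1.1, ?_⟩, h⟩
    have h1 := part_le_sum α h.1.1
    have h2 := h.1.2
    omega

lemma col0_skew (α β : List ℕ) (hα : IsComposition α) (hβ : IsComposition β) (r : ℕ) :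
    InSkew α β (r, 0) ↔ β.length ≤ r ∧ r < α.length := by
  rw [mem_skew_iff]
  constructor
  · rintro ⟨h1, _, h3⟩
    rcases h3 with h | h
    · exact ⟨h, h1⟩
    · by_cases hr : r < β.length
      · have := part_pos β hβ hr; omega
      · exact ⟨by omega, h1⟩
  · rintro ⟨h1, h2⟩
    exact ⟨h2, part_pos α hα h2, Or.inl h1⟩

lemma skewSize_eq (α β : List ℕ) (hα : IsComposition α) (hβ : IsComposition β)
    (hsub : SubComp β α) :
    skewSize α β = (α.length - β.length) + gsum α β 0 := by
  have hlen : β.length ≤ α.length := hsub.1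
  have key : α.sum = β.sum + (α.length - β.length) + gsum α β 0 := by
    rw [list_sum_eq α, list_sum_eq β]
    have hsplit : Finset.range α.length = Finset.Ico 0 α.length := by
      rw [Finset.range_eq_Ico]
    rw [hsplit, ← Finset.sum_Ico_consecutive _ (Nat.zero_le β.length) hlen]
    have h1 : ∑ r ∈ Finset.Ico 0 β.length, part α r
        = (∑ r ∈ Finset.range β.length, part β r) + ∑ r ∈ Finset.Ico 0 β.length, rowlen α β r := by
      rw [Finset.range_eq_Ico, ← Finset.sum_add_distrib]
      refine Finset.sum_congr rfl fun r hr => ?_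
      rw [Finset.mem_Ico] at hr
      have h2 := hsub.2 r hr.2
      rw [rowlen, if_pos hr.2]
      omega
    have h2 : ∑ r ∈ Finset.Ico β.length α.length, part α r
        = (α.length - β.length) + ∑ r ∈ Finset.Ico β.length α.length, rowlen α β r := by
      have e1 : ∑ r ∈ Finset.Ico β.length α.length, part α r
          = ∑ r ∈ Finset.Ico β.length α.length, (1 + rowlen α β r) := by
        refine Finset.sum_congr rfl fun r hr => ?_
        rw [Finset.mem_Ico] at hr
        have := part_pos α hα hr.2
        rw [rowlen, if_neg (by omega)]
        omega
      rw [e1, Finset.sum_add_distrib, Finset.sum_const, Nat.card_Ico, smul_eq_mul, mul_one]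
    rw [h1, h2, gsum]
    rw [← Finset.sum_Ico_consecutive _ (Nat.zero_le β.length) hlen]
    omega
  rw [skewSize, key]
  omega

-- ===== defs from original file needed now =====

def offv (β : List ℕ) (r j : ℕ) : ℕ := if r < β.length then j - part β r + 1 else j

/-- the reverse reading order on cells -/

def Prec (c c' : ℕ × ℕ) : Prop := c'.1 < c.1 ∨ (c.1 = c'.1 ∧ c.2 < c'.2)

lemma S0_col0 (α β : List ℕ) (hα : IsComposition α) (hβ : IsComposition β)
    {r : ℕ} (hsk : InSkew α β (r, 0)) : S0 α β (r, 0) = r - β.length + 1 := by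
  have h := (col0_skew α β hα hβ r).1 hsk
  rw [S0, if_pos hsk, if_pos ⟨rfl, h.1⟩]

lemma S0_noncol0 (α β : List ℕ) {r j : ℕ} (hsk : InSkew α β (r, j)) (hj : j ≠ 0) :
    S0 α β (r, j) = (α.length - β.length) + gsum α β (r + 1) + offv β r j := by
  rw [S0, if_pos hsk, if_neg (by simp [hj]), aboveCount_eq, offv]

lemma offv_bounds (α β : List ℕ) (hα : IsComposition α)
    {r j : ℕ} (hsk : InSkew α β (r, j)) (hj : j ≠ 0) :
    1 ≤ offv β r j ∧ offv β r j ≤ rowlen α β r := by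
  rw [mem_skew_iff] at hsk
  obtain ⟨h1, h2, h3⟩ := hsk
  unfold offv rowlen
  by_cases hr : r < β.length
  · rw [if_pos hr, if_pos hr]
    have hbj : part β r ≤ j := by rcases h3 with h | h <;> omega
    omega
  · rw [if_neg hr, if_neg hr]
    omega

lemma S0_noncol0_bounds (α β : List ℕ) (hα : IsComposition α)
    {r j : ℕ} (hsk : InSkew α β (r, j)) (hj : j ≠ 0) :
    (α.length - β.length) + gsum α β (r + 1) + 1 ≤ S0 α β (r, j) ∧
      S0 α β (r, j) ≤ (α.length - β.length) + gsum α β 0 := by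
  rw [S0_noncol0 α β hsk hj]
  have hb := offv_bounds α β hα hsk hj
  have hr : r < α.length := ((mem_skew_iff α β r j).1 hsk).1
  have := gsum_le α β (Nat.zero_le r) hr
  omega

lemma S0_mono (α β : List ℕ) (hα : IsComposition α)
    {r j r' j' : ℕ} (hsk : InSkew α β (r, j)) (hsk' : InSkew α β (r', j'))
    (hj : j ≠ 0) (hj' : j' ≠ 0) (hp : Prec (r, j) (r', j')) :
    S0 α β (r, j) < S0 α β (r', j') := by
  rcases hp with h | ⟨h1, h2⟩
  · simp only at h
    have hb := S0_noncol0_bounds α β hα hsk hj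
    have hb' := S0_noncol0_bounds α β hα hsk' hj'
    rw [S0_noncol0 α β hsk hj] at hb ⊢
    rw [S0_noncol0 α β hsk' hj']
    have hr : r < α.length := ((mem_skew_iff α β r j).1 hsk).1
    have hg := gsum_le α β (by omega : r' + 1 ≤ r) hr
    have hoff := offv_bounds α β hα hsk hj
    have hoff' := offv_bounds α β hα hsk' hj'
    omega
  · simp only at h1 h2
    subst h1
    rw [S0_noncol0 α β hsk hj, S0_noncol0 α β hsk' hj']
    have hbj : r < β.length → part β r ≤ j := by
      intro hr
      rcases ((mem_skew_iff α β r j).1 hsk).2.2 with h | h <;> omega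
    unfold offv
    by_cases hr : r < β.length
    · rw [if_pos hr, if_pos hr]
      have := hbj hr
      omega
    · rw [if_neg hr, if_neg hr]
      omega

lemma find_row (α β : List ℕ) :
    ∀ k a w, α.length ≤ a + k → 1 ≤ w → w ≤ gsum α β a →
      ∃ r, a ≤ r ∧ r < α.length ∧ gsum α β (r + 1) < w ∧
        w ≤ gsum α β (r + 1) + rowlen α β r := by
  intro k
  induction k with
  | zero =>
      intro a w hk hw hle
      rw [gsum_of_ge α β (by omega)] at hle
      omega
  | succ n ih =>
      intro a w hk hw hle
      have ha : a < α.length := by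
        by_contra h
        rw [gsum_of_ge α β (by omega)] at hle
        omega
      by_cases h : gsum α β (a + 1) < w
      · exact ⟨a, le_rfl, ha, h, by rw [gsum_succ α β ha] at hle; omega⟩
      · obtain ⟨r, hr1, hr2, hr3, hr4⟩ := ih (a + 1) w (by omega) hw (by omega)
        exact ⟨r, by omega, hr2, hr3, hr4⟩

lemma S0_IsSIT (α β : List ℕ) (hα : IsComposition α) (hβ : IsComposition β)
    (hsub : SubComp β α) : IsSIT α β (S0 α β) := by
  have hN := skewSize_eq α β hα hβ hsub
  set L := α.length - β.length with hL
  have hval_mem : ∀ c, InSkew α β c → S0 α β c ∈ Finset.Icc 1 (skewSize α β) := by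
    rintro ⟨r, j⟩ hsk
    rw [Finset.mem_Icc]
    by_cases hj : j = 0
    · subst hj
      have h := (col0_skew α β hα hβ r).1 hsk
      rw [S0_col0 α β hα hβ hsk]
      have : r - β.length + 1 ≤ L := by omega
      omega
    · have := S0_noncol0_bounds α β hα hsk hj
      omega
  refine ⟨⟨?_, hval_mem, ?_, ?_⟩, ?_, ?_⟩
  · intro c hc
    rw [S0, if_neg hc]
  · -- injectivity
    rintro ⟨r, j⟩ ⟨r', j'⟩ hsk hsk' heq
    by_cases hj : j = 0 <;> by_cases hj' : j' = 0
    · subst hj; subst hj'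
      have h := (col0_skew α β hα hβ r).1 hsk
      have h' := (col0_skew α β hα hβ r').1 hsk'
      rw [S0_col0 α β hα hβ hsk, S0_col0 α β hα hβ hsk'] at heq
      have : r = r' := by omega
      simp [this]
    · subst hj
      have h := (col0_skew α β hα hβ r).1 hsk
      rw [S0_col0 α β hα hβ hsk] at heq
      have := S0_noncol0_bounds α β hα hsk' hj'
      omega
    · subst hj'
      have h := (col0_skew α β hα hβ r').1 hsk'
      rw [S0_col0 α β hα hβ hsk'] at heq
      have := S0_noncol0_bounds α β hα hsk hj
      omega
    · by_cases hrr : r = r'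
      · subst hrr
        rcases Nat.lt_trichotomy j j' with h | h | h
        · have := S0_mono α β hα hsk hsk' hj hj' (Or.inr ⟨rfl, h⟩); omega
        · simp [h]
        · have := S0_mono α β hα hsk' hsk hj' hj (Or.inr ⟨rfl, h⟩); omega
      · rcases Nat.lt_trichotomy r r' with h | h | h
        · have := S0_mono α β hα hsk' hsk hj' hj (Or.inl h); omega
        · exact absurd h hrr
        · have := S0_mono α β hα hsk hsk' hj hj' (Or.inl h); omega
  · -- surjectivity
    intro v hv
    rw [Finset.mem_Icc] at hv
    by_cases hvL : v ≤ L
    · refine ⟨(β.length + v - 1, 0), ?_, ?_⟩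
      · rw [col0_skew α β hα hβ]
        constructor <;> omega
      · have hsk : InSkew α β (β.length + v - 1, 0) := by
          rw [col0_skew α β hα hβ]; constructor <;> omega
        rw [S0_col0 α β hα hβ hsk]
        omega
    · -- v > L
      have hw : 1 ≤ v - L ∧ v - L ≤ gsum α β 0 := by omega
      obtain ⟨r, hr1, hr2, hr3, hr4⟩ :=
        find_row α β α.length 0 (v - L) (by omega) hw.1 hw.2
      set o := v - L - gsum α β (r + 1) with ho
      have hob : 1 ≤ o ∧ o ≤ rowlen α β r := by omega
      by_cases hrb : r < β.length
      · have hble : part β r ≤ part α r := hsub.2 r hrb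
        refine ⟨(r, part β r + o - 1), ?_, ?_⟩
        · rw [mem_skew_iff]
          refine ⟨hr2, ?_, Or.inr (by omega)⟩
          have : rowlen α β r = part α r - part β r := by rw [rowlen, if_pos hrb]
          omega
        · have hsk : InSkew α β (r, part β r + o - 1) := by
            rw [mem_skew_iff]
            refine ⟨hr2, ?_, Or.inr (by omega)⟩
            have : rowlen α β r = part α r - part β r := by rw [rowlen, if_pos hrb]
            omega
          have hj : part β r + o - 1 ≠ 0 := by
            have := part_pos β hβ hrb
            omega
          rw [S0_noncol0 α β hsk hj, offv, if_pos hrb]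
          have := part_pos β hβ hrb
          omega
      · refine ⟨(r, o), ?_, ?_⟩
        · rw [mem_skew_iff]
          refine ⟨hr2, ?_, Or.inl (by omega)⟩
          have : rowlen α β r = part α r - 1 := by rw [rowlen, if_neg hrb]
          have := part_pos α hα hr2
          omega
        · have hsk : InSkew α β (r, o) := by
            rw [mem_skew_iff]
            refine ⟨hr2, ?_, Or.inl (by omega)⟩
            have : rowlen α β r = part α r - 1 := by rw [rowlen, if_neg hrb]
            have := part_pos α hα hr2
            omega
          rw [S0_noncol0 α β hsk (by omega), offv, if_neg hrb]
          omega
  · -- RowsStrict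
    intro r j j' hjj hsk hsk'
    by_cases hj : j = 0
    · subst hj
      have h := (col0_skew α β hα hβ r).1 hsk
      rw [S0_col0 α β hα hβ hsk]
      have := S0_noncol0_bounds α β hα hsk' (by omega)
      omega
    · exact S0_mono α β hα hsk hsk' hj (by omega) (Or.inr ⟨rfl, hjj⟩)
  · -- FirstColStrict
    intro r r' hrr hsk hsk'
    have h := (col0_skew α β hα hβ r).1 hsk
    have h' := (col0_skew α β hα hβ r').1 hsk'
    rw [S0_col0 α β hα hβ hsk, S0_col0 α β hα hβ hsk']
    omega

-- ===== more defs from original file =====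

lemma swap_invol (i : ℕ) (T : ℕ × ℕ → ℕ) : swapEntries i (swapEntries i T) = T := by
  funext c
  simp only [swapEntries]
  split_ifs <;> omega

lemma eq_of_isSIT_val {α β : List ℕ} {T : ℕ × ℕ → ℕ} (hT : IsSIT α β T)
    {c c' : ℕ × ℕ} (hc : InSkew α β c) (hc' : InSkew α β c') (h : T c = T c') : c = c' :=
  hT.1.inj c c' hc hc' h

lemma swap_SIT (α β : List ℕ) {T : ℕ × ℕ → ℕ} (hT : IsSIT α β T)
    {i : ℕ} {c c' : ℕ × ℕ} (hc : InSkew α β c) (hc' : InSkew α β c')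
    (hTc : T c = i) (hTc' : T c' = i + 1) (hrow : c.1 < c'.1)
    (hcol : ¬(c.2 = 0 ∧ c'.2 = 0)) (hi : 1 ≤ i) (hi1 : i + 1 ≤ skewSize α β) :
    IsSIT α β (swapEntries i T) := by
  obtain ⟨⟨hz, hm, hinj, hsurj⟩, hrows, hfcol⟩ := hT
  have hmem : ∀ d, InSkew α β d → 1 ≤ T d ∧ T d ≤ skewSize α β := by
    intro d hd
    have := hm d hd
    rw [Finset.mem_Icc] at this
    exact this
  -- key monotonicity of the value swap
  have hlt : ∀ d d', InSkew α β d → InSkew α β d' → T d < T d' →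
      ¬(d = c ∧ d' = c') → swapEntries i T d < swapEntries i T d' := by
    intro d d' hd hd' hdd hne
    have h1 : ¬(T d = i ∧ T d' = i + 1) := by
      rintro ⟨e1, e2⟩
      exact hne ⟨hinj d c hd hc (by omega), hinj d' c' hd' hc' (by omega)⟩
    simp only [swapEntries]
    split_ifs <;> omega
  refine ⟨⟨?_, ?_, ?_, ?_⟩, ?_, ?_⟩
  · intro d hd
    have h0 := hz d hd
    simp only [swapEntries, h0]
    rw [if_neg (by omega), if_neg (by omega)]
  · intro d hd
    have := hmem d hd
    rw [Finset.mem_Icc]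
    simp only [swapEntries]
    split_ifs <;> omega
  · intro d d' hd hd' heq
    apply hinj d d' hd hd'
    simp only [swapEntries] at heq
    split_ifs at heq <;> omega
  · intro v hv
    rw [Finset.mem_Icc] at hv
    by_cases h1 : v = i
    · exact ⟨c', hc', by simp only [swapEntries]; rw [if_neg (by omega), if_pos hTc']; omega⟩
    · by_cases h2 : v = i + 1
      · exact ⟨c, hc, by simp only [swapEntries]; rw [if_pos hTc]; omega⟩
      · obtain ⟨d, hd, hdv⟩ := hsurj v (Finset.mem_Icc.mpr hv)
        exact ⟨d, hd, by simp only [swapEntries]; rw [if_neg (by omega), if_neg (by omega)]; exact hdv⟩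
  · intro a b b' hbb hsk hsk'
    refine hlt _ _ hsk hsk' (hrows a b b' hbb hsk hsk') ?_
    rintro ⟨e1, e2⟩
    rw [← e1, ← e2] at hrow
    simp at hrow
  · intro a a' haa hsk hsk'
    refine hlt _ _ hsk hsk' (hfcol a a' haa hsk hsk') ?_
    rintro ⟨e1, e2⟩
    apply hcol
    rw [← e1, ← e2]
    exact ⟨rfl, rfl⟩

noncomputable def wt (α β : List ℕ) (T : ℕ × ℕ → ℕ) : ℕ :=
  ∑ c ∈ skewCells α β, T c * c.1

lemma wt_swap (α β : List ℕ) {T : ℕ × ℕ → ℕ} (hT : IsSIT α β T)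
    {i : ℕ} {c c' : ℕ × ℕ} (hc : InSkew α β c) (hc' : InSkew α β c')
    (hTc : T c = i) (hTc' : T c' = i + 1) (hrow : c.1 < c'.1) (hi : 1 ≤ i) :
    wt α β (swapEntries i T) < wt α β T := by
  obtain ⟨⟨hz, hm, hinj, hsurj⟩, hrows, hfcol⟩ := hT
  have hne : c' ≠ c := by
    intro h; rw [h] at hrow; omega
  have hcm : c ∈ skewCells α β := (mem_skewCells α β c).2 hc
  have hc'm : c' ∈ (skewCells α β).erase c := Finset.mem_erase.2 ⟨hne, (mem_skewCells α β c').2 hc'⟩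
  have hsame : ∀ d ∈ ((skewCells α β).erase c).erase c', swapEntries i T d * d.1 = T d * d.1 := by
    intro d hd
    rw [Finset.mem_erase, Finset.mem_erase] at hd
    have hdsk := (mem_skewCells α β d).1 hd.2.2
    have h1 : T d ≠ i := fun h => hd.2.1 (hinj d c hdsk hc (by omega))
    have h2 : T d ≠ i + 1 := fun h => hd.1 (hinj d c' hdsk hc' (by omega))
    simp only [swapEntries]
    rw [if_neg h1, if_neg h2]
  have decT : wt α β T = T c * c.1 + (T c' * c'.1 +
      ∑ d ∈ ((skewCells α β).erase c).erase c', T d * d.1) := by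
    rw [wt, ← Finset.add_sum_erase _ _ hcm, ← Finset.add_sum_erase _ _ hc'm]
  have decU : wt α β (swapEntries i T) = swapEntries i T c * c.1 + (swapEntries i T c' * c'.1 +
      ∑ d ∈ ((skewCells α β).erase c).erase c', T d * d.1) := by
    rw [wt, ← Finset.add_sum_erase _ _ hcm, ← Finset.add_sum_erase _ _ hc'm,
      Finset.sum_congr rfl hsame]
  have hUc : swapEntries i T c = i + 1 := by simp only [swapEntries]; rw [if_pos hTc]
  have hUc' : swapEntries i T c' = i := by
    simp only [swapEntries]; rw [if_neg (by omega), if_pos hTc']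
  rw [decT, decU, hUc, hUc', hTc, hTc']
  have e1 : (i + 1) * c.1 = i * c.1 + c.1 := Nat.succ_mul i c.1
  have e2 : (i + 1) * c'.1 = i * c'.1 + c'.1 := Nat.succ_mul i c'.1
  omega

lemma Prec_tri {c c' : ℕ × ℕ} (h : c ≠ c') : Prec c c' ∨ Prec c' c := by
  rcases c with ⟨a, b⟩
  rcases c' with ⟨a', b'⟩
  simp only [ne_eq, Prod.mk.injEq, not_and] at h
  unfold Prec
  simp only
  omega

lemma count_lemma (L N : ℕ) (A : Finset (ℕ × ℕ)) (F : ℕ × ℕ → ℕ)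
    (hmem : ∀ c ∈ A, L + 1 ≤ F c ∧ F c ≤ N)
    (hinj : ∀ c ∈ A, ∀ c' ∈ A, F c = F c' → c = c')
    (hsurj : ∀ v, L + 1 ≤ v → v ≤ N → ∃ c ∈ A, F c = v)
    (hmono : ∀ c ∈ A, ∀ c' ∈ A, Prec c c' → F c < F c') :
    ∀ c ∈ A, F c = L + (A.filter (fun d => d = c ∨ Prec d c)).card := by
  intro c hc
  have e : (A.filter (fun d => d = c ∨ Prec d c)).card = (Finset.Icc (L + 1) (F c)).card := by
    apply Finset.card_bij (fun d _ => F d)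
    · intro d hd
      rw [Finset.mem_filter] at hd
      rw [Finset.mem_Icc]
      have h1 := hmem d hd.1
      rcases hd.2 with h | h
      · subst h; omega
      · have := hmono d hd.1 c hc h
        omega
    · intro d1 hd1 d2 hd2 heq
      rw [Finset.mem_filter] at hd1 hd2
      exact hinj d1 hd1.1 d2 hd2.1 heq
    · intro v hv
      rw [Finset.mem_Icc] at hv
      have h1 := hmem c hc
      obtain ⟨d, hd, hdv⟩ := hsurj v hv.1 (by omega)
      refine ⟨d, ?_, hdv⟩
      rw [Finset.mem_filter]
      refine ⟨hd, ?_⟩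
      by_cases hdc : d = c
      · exact Or.inl hdc
      · rcases Prec_tri hdc with h | h
        · exact Or.inr h
        · have := hmono c hc d hd h
          omega
  rw [e, Nat.card_Icc]
  have := hmem c hc
  omega

lemma eq_S0_of_pairs (α β : List ℕ) (hα : IsComposition α) (hβ : IsComposition β)
    (hsub : SubComp β α) (hN : 1 ≤ skewSize α β) {T : ℕ × ℕ → ℕ} (hT : IsSIT α β T)
    (Hpair : ∀ i c c', 1 ≤ i → i + 1 ≤ skewSize α β → InSkew α β c → InSkew α β c' →
      T c = i → T c' = i + 1 → c'.1 ≤ c.1 ∨ (c.2 = 0 ∧ c'.2 = 0)) :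
    T = S0 α β := by
  have hNeq := skewSize_eq α β hα hβ hsub
  have hlen : β.length ≤ α.length := hsub.1
  set N := skewSize α β with hNdef
  set L := α.length - β.length with hLdef
  obtain ⟨⟨hz, hm, hinj, hsurj⟩, hrows, hfcol⟩ := hT
  have hmem : ∀ d, InSkew α β d → 1 ≤ T d ∧ T d ≤ N := by
    intro d hd
    have := hm d hd
    rw [Finset.mem_Icc] at this
    exact this
  have hpos0 : ∀ v : ℕ, ∃ c, (1 ≤ v ∧ v ≤ N) → (InSkew α β c ∧ T c = v) := by
    intro v
    by_cases h : 1 ≤ v ∧ v ≤ N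
    · obtain ⟨c, hc⟩ := hsurj v (Finset.mem_Icc.mpr h)
      exact ⟨c, fun _ => hc⟩
    · exact ⟨(0, 0), fun h' => absurd h' h⟩
  choose pos hpos using hpos0
  have posSkew : ∀ v, 1 ≤ v → v ≤ N → InSkew α β (pos v) := fun v h1 h2 => (hpos v ⟨h1, h2⟩).1
  have posVal : ∀ v, 1 ≤ v → v ≤ N → T (pos v) = v := fun v h1 h2 => (hpos v ⟨h1, h2⟩).2
  have posEq : ∀ v c, InSkew α β c → T c = v → pos v = c := by
    intro v c hc hcv
    have hv := hmem c hc
    exact hinj _ _ (posSkew v (by omega) (by omega)) hc (by rw [posVal v (by omega) (by omega), hcv])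
  -- chain lemma
  have chain : ∀ d a, 1 ≤ a → a + d ≤ N →
      (∀ m, a ≤ m → m < a + d → (pos (m + 1)).1 ≤ (pos m).1) →
      (pos (a + d)).1 ≤ (pos a).1 := by
    intro d
    induction d with
    | zero => intro a _ _ _; simp
    | succ n ih =>
        intro a h1 h2 hstep
        have hrec := ih a h1 (by omega) (fun m hm1 hm2 => hstep m hm1 (by omega))
        have h3 := hstep (a + n) (by omega) (by omega)
        have : a + (n + 1) = (a + n) + 1 := by omega
        rw [this]
        omega
  have Hrow : ∀ m, 1 ≤ m → m + 1 ≤ N → (pos m).2 ≠ 0 → (pos (m + 1)).1 ≤ (pos m).1 := by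
    intro m h1 h2 hc
    rcases Hpair m (pos m) (pos (m + 1)) h1 h2 (posSkew m (by omega) (by omega))
      (posSkew (m + 1) (by omega) (by omega)) (posVal m (by omega) (by omega))
      (posVal (m + 1) (by omega) (by omega)) with h | h
    · exact h
    · exact absurd h.1 hc
  -- Step 1 : column-0 entries
  have hcol0 : ∀ j, j < L → T (β.length + j, 0) = j + 1 := by
    intro j
    induction j using Nat.strong_induction_on with
    | _ j ih =>
    intro hjL
    have hsk : InSkew α β (β.length + j, 0) :=
      (col0_skew α β hα hβ _).2 ⟨by omega, by omega⟩
    have hwm := hmem _ hsk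
    set w := T (β.length + j, 0) with hw
    have hge : j + 1 ≤ w := by
      rcases Nat.eq_zero_or_pos j with h0 | hj0
      · omega
      · have hsk' : InSkew α β (β.length + (j - 1), 0) :=
          (col0_skew α β hα hβ _).2 ⟨by omega, by omega⟩
        have hval' : T (β.length + (j - 1), 0) = (j - 1) + 1 := ih (j - 1) (by omega) (by omega)
        have := hfcol (β.length + (j - 1)) (β.length + j) (by omega) hsk' hsk
        omega
    by_contra hne2
    have hwgt : j + 1 < w := by omega
    have hposW : pos w = (β.length + j, 0) := posEq w _ hsk rfl
    -- entries in (j, w) are not in column 0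
    have hnotcol : ∀ m, j + 1 ≤ m → m ≤ w - 1 → (pos m).2 ≠ 0 := by
      intro m hm1 hm2 hcz
      have hskm : InSkew α β (pos m) := posSkew m (by omega) (by omega)
      have hvm : T (pos m) = m := posVal m (by omega) (by omega)
      rcases hpme : pos m with ⟨r, s⟩
      rw [hpme] at hskm hvm hcz
      simp only at hcz
      subst hcz
      have hr := (col0_skew α β hα hβ r).1 hskm
      rcases Nat.lt_trichotomy r (β.length + j) with h | h | h
      · have hval' : T (β.length + (r - β.length), 0) = (r - β.length) + 1 :=
          ih (r - β.length) (by omega) (by omega)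
        have : β.length + (r - β.length) = r := by omega
        rw [this] at hval'
        omega
      · subst h
        omega
      · have := hfcol (β.length + j) r (by omega) hsk hskm
        omega
    have hchain : (pos w).1 ≤ (pos (j + 1)).1 := by
      have := chain (w - (j + 1)) (j + 1) (by omega) (by omega) (fun m hm1 hm2 =>
        Hrow m (by omega) (by omega) (hnotcol m (by omega) (by omega)))
      have he : (j + 1) + (w - (j + 1)) = w := by omega
      rw [he] at this
      exact this
    rw [hposW] at hchain
    simp only at hchain
    rcases Nat.eq_zero_or_pos j with h0 | hj0
    · subst h0
      have hcnz : (pos 1).2 ≠ 0 := hnotcol 1 le_rfl (by omega)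
      have h1sk : InSkew α β (pos 1) := posSkew 1 (by omega) (by omega)
      have h1v : T (pos 1) = 1 := posVal 1 (by omega) (by omega)
      rcases hpme : pos 1 with ⟨r, s⟩
      rw [hpme] at hcnz h1sk h1v hchain
      simp only at hcnz hchain
      rw [mem_skew_iff] at h1sk
      have hleft : InSkew α β (r, s - 1) := by
        rw [mem_skew_iff]
        exact ⟨h1sk.1, by omega, Or.inl (by omega)⟩
      have := hrows r (s - 1) s (by omega) hleft (by rw [mem_skew_iff]; exact h1sk)
      have := hmem _ hleft
      omega
    · have hskj : InSkew α β (β.length + (j - 1), 0) :=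
        (col0_skew α β hα hβ _).2 ⟨by omega, by omega⟩
      have hposj : pos j = (β.length + (j - 1), 0) :=
        posEq j _ hskj (by rw [ih (j - 1) (by omega) (by omega)]; omega)
      have hj1nc : (pos (j + 1)).2 ≠ 0 := hnotcol (j + 1) le_rfl (by omega)
      rcases Hpair j (pos j) (pos (j + 1)) (by omega) (by omega)
        (posSkew j (by omega) (by omega)) (posSkew (j + 1) (by omega) (by omega))
        (posVal j (by omega) (by omega)) (posVal (j + 1) (by omega) (by omega)) with h | h
      · rw [hposj] at h
        simp only at h
        omega
      · exact hj1nc h.2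
  -- corollaries
  have colval : ∀ r s, InSkew α β (r, s) → s = 0 → T (r, s) = r - β.length + 1 := by
    intro r s hsk hs
    subst hs
    have hr := (col0_skew α β hα hβ r).1 hsk
    have := hcol0 (r - β.length) (by omega)
    have he : β.length + (r - β.length) = r := by omega
    rw [he] at this
    omega
  have hbig : ∀ r s, InSkew α β (r, s) → s ≠ 0 → L + 1 ≤ T (r, s) := by
    intro r s hsk hs
    by_contra h
    have h1 := hmem _ hsk
    have h2 : T (r, s) ≤ L := by omega
    have hskc : InSkew α β (β.length + (T (r, s) - 1), 0) :=
      (col0_skew α β hα hβ _).2 ⟨by omega, by omega⟩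
    have h3 : T (β.length + (T (r, s) - 1), 0) = T (r, s) := by
      rw [hcol0 (T (r, s) - 1) (by omega)]
      omega
    have := hinj _ _ hsk hskc h3.symm
    rw [Prod.mk.injEq] at this
    exact hs this.2
  have hposnc : ∀ m, L + 1 ≤ m → m ≤ N → (pos m).2 ≠ 0 := by
    intro m h1 h2 hcz
    have hskm : InSkew α β (pos m) := posSkew m (by omega) (by omega)
    have hvm : T (pos m) = m := posVal m (by omega) (by omega)
    rcases hpme : pos m with ⟨r, s⟩
    rw [hpme] at hskm hvm hcz
    simp only at hcz
    subst hcz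
    have := colval r 0 hskm rfl
    have hr := (col0_skew α β hα hβ r).1 hskm
    omega
  -- Step 2 : monotonicity wrt Prec
  have key : ∀ v v', L + 1 ≤ v → v < v' → v' ≤ N →
      ((pos v').1 < (pos v).1 ∨ ((pos v').1 = (pos v).1 ∧ (pos v).2 < (pos v').2)) := by
    intro v v' h1 h2 h3
    have hchain : (pos v').1 ≤ (pos v).1 := by
      have := chain (v' - v) v (by omega) (by omega) (fun m hm1 hm2 =>
        Hrow m (by omega) (by omega) (hposnc m (by omega) (by omega)))
      have he : v + (v' - v) = v' := by omega
      rw [he] at this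
      exact this
    rcases Nat.lt_or_ge (pos v').1 (pos v).1 with h | h
    · exact Or.inl h
    · have heqr : (pos v').1 = (pos v).1 := by omega
      refine Or.inr ⟨heqr, ?_⟩
      have hskv : InSkew α β (pos v) := posSkew v (by omega) (by omega)
      have hskv' : InSkew α β (pos v') := posSkew v' (by omega) (by omega)
      have hvv : T (pos v) = v := posVal v (by omega) (by omega)
      have hvv' : T (pos v') = v' := posVal v' (by omega) (by omega)
      rcases hp1 : pos v with ⟨r, s⟩
      rcases hp2 : pos v' with ⟨r', s'⟩
      rw [hp1] at hskv hvv heqr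
      rw [hp2] at hskv' hvv' heqr
      simp only at heqr ⊢
      rw [← heqr] at hskv hvv
      rcases Nat.lt_trichotomy s s' with h | h | h
      · exact h
      · subst h; omega
      · have := hrows r' s' s h hskv' hskv
        omega
  have hmono : ∀ c c', InSkew α β c → InSkew α β c' → c.2 ≠ 0 → c'.2 ≠ 0 → Prec c c' →
      T c < T c' := by
    intro c c' hc hc' hc2 hc'2 hp
    rcases c with ⟨r, s⟩
    rcases c' with ⟨r', s'⟩
    have hb := hbig r s hc hc2
    have hb' := hbig r' s' hc' hc'2
    have hm1 := hmem _ hc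
    have hm2 := hmem _ hc'
    rcases Nat.lt_trichotomy (T (r, s)) (T (r', s')) with h | h | h
    · exact h
    · have := hinj _ _ hc hc' h
      rw [Prod.mk.injEq] at this
      unfold Prec at hp
      simp only at hp
      omega
    · exfalso
      have hk := key (T (r', s')) (T (r, s)) (by omega) h (by omega)
      have hp1 : pos (T (r, s)) = (r, s) := posEq _ _ hc rfl
      have hp2 : pos (T (r', s')) = (r', s') := posEq _ _ hc' rfl
      rw [hp1, hp2] at hk
      unfold Prec at hp
      simp only at hk hp
      omega
  -- assemble via counting
  set A := (skewCells α β).filter (fun d => d.2 ≠ 0) with hA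
  have hmemA : ∀ c, c ∈ A ↔ (InSkew α β c ∧ c.2 ≠ 0) := by
    intro c
    rw [hA, Finset.mem_filter, mem_skewCells]
  have hTcount := count_lemma L N A T
    (fun c hc => by
      have h := (hmemA c).1 hc
      rcases c with ⟨r, s⟩
      exact ⟨hbig r s h.1 h.2, (hmem _ h.1).2⟩)
    (fun c hc c' hc' h => hinj c c' ((hmemA c).1 hc).1 ((hmemA c').1 hc').1 h)
    (fun v h1 h2 => by
      obtain ⟨c, hc, hcv⟩ := hsurj v (Finset.mem_Icc.mpr ⟨by omega, h2⟩)
      rcases c with ⟨r, s⟩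
      refine ⟨(r, s), (hmemA _).2 ⟨hc, ?_⟩, hcv⟩
      intro hc2
      simp only at hc2
      subst hc2
      have := colval r 0 hc rfl
      have hr := (col0_skew α β hα hβ r).1 hc
      omega)
    (fun c hc c' hc' hp => hmono c c' ((hmemA c).1 hc).1 ((hmemA c').1 hc').1
      ((hmemA c).1 hc).2 ((hmemA c').1 hc').2 hp)
  have hS0 := S0_IsSIT α β hα hβ hsub
  have hS0count := count_lemma L N A (S0 α β)
    (fun c hc => by
      have h := (hmemA c).1 hc
      rcases c with ⟨r, s⟩
      have := S0_noncol0_bounds α β hα h.1 h.2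
      omega)
    (fun c hc c' hc' h => hS0.1.inj c c' ((hmemA c).1 hc).1 ((hmemA c').1 hc').1 h)
    (fun v h1 h2 => by
      obtain ⟨c, hc, hcv⟩ := hS0.1.surj v (Finset.mem_Icc.mpr ⟨by omega, by omega⟩)
      rcases c with ⟨r, s⟩
      refine ⟨(r, s), (hmemA _).2 ⟨hc, ?_⟩, hcv⟩
      intro hc2
      simp only at hc2
      subst hc2
      have hr := (col0_skew α β hα hβ r).1 hc
      rw [S0_col0 α β hα hβ hc] at hcv
      omega)
    (fun c hc c' hc' hp => by
      have h := (hmemA c).1 hc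
      have h' := (hmemA c').1 hc'
      rcases c with ⟨r, s⟩
      rcases c' with ⟨r', s'⟩
      exact S0_mono α β hα h.1 h'.1 h.2 h'.2 hp)
  funext c
  rcases c with ⟨r, s⟩
  by_cases hsk : InSkew α β (r, s)
  · by_cases hs : s = 0
    · subst hs
      rw [colval r 0 hsk rfl, S0_col0 α β hα hβ hsk]
    · have hcA : (r, s) ∈ A := (hmemA _).2 ⟨hsk, hs⟩
      rw [hTcount _ hcA, hS0count _ hcA]
  · rw [hz _ hsk, S0, if_neg hsk]

lemma exists_step (α β : List ℕ) (hα : IsComposition α) (hβ : IsComposition β)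
    (hsub : SubComp β α) (hN : 1 ≤ skewSize α β) {T : ℕ × ℕ → ℕ} (hT : IsSIT α β T)
    (hne : T ≠ S0 α β) :
    ∃ i U, 1 ≤ i ∧ i ≤ skewSize α β - 1 ∧ IsSIT α β U ∧
      piOp .rdI α β i U = T ∧ wt α β U < wt α β T := by
  by_contra hno
  push_neg at hno
  apply hne
  apply eq_S0_of_pairs α β hα hβ hsub hN hT
  intro i c c' hi hi1 hc hc' hTc hTc'
  by_contra hcon
  push_neg at hcon
  obtain ⟨h1, h2⟩ := hcon
  have hrow : c.1 < c'.1 := by omega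
  have hU : IsSIT α β (swapEntries i T) :=
    swap_SIT α β hT hc hc' hTc hTc' hrow (by tauto) hi hi1
  set U := swapEntries i T with hUdef
  have hUc : U c = i + 1 := by simp only [hUdef, swapEntries]; rw [if_pos hTc]
  have hUc' : U c' = i := by
    simp only [hUdef, swapEntries]; rw [if_neg (by omega), if_pos hTc']
  have hDes : i ∈ Des .rdI α β U := by
    rw [Des, Finset.mem_filter, Finset.mem_Icc]
    exact ⟨⟨hi, by omega⟩, c', c, hc', hc, hUc', hUc, le_of_lt hrow⟩
  have hswapU : swapEntries i U = T := swap_invol i T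
  have hpi : piOp .rdI α β i U = T := by
    rw [piOp, if_pos hDes, hswapU, if_pos hT]
  have hwt : wt α β U < wt α β T := wt_swap α β hT hc hc' hTc hTc' hrow hi
  have := hno i U hi (by omega) hU hpi
  omega

lemma trivial_chain (α β : List ℕ) (U : ℕ × ℕ → ℕ) (hU : IsSIT α β U) :
    ∃ (r : ℕ) (js : Fin r → ℕ) (Ts : Fin (r + 1) → ℕ × ℕ → ℕ),
      Ts 0 = U ∧ Ts (Fin.last r) = U ∧ (∀ k, IsSIT α β (Ts k)) ∧
      (∀ k l : Fin (r + 1), k < l → wt α β (Ts l) < wt α β (Ts k)) ∧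
      (∀ m : Fin r, 1 ≤ js m ∧ js m ≤ skewSize α β - 1 ∧
        piOp .rdI α β (js m) (Ts m.succ) = Ts m.castSucc) := by
  refine ⟨0, Fin.elim0, fun _ => U, rfl, rfl, fun _ => hU, ?_, fun m => m.elim0⟩
  intro k l hkl
  have hk := k.isLt
  have hl := l.isLt
  rw [Fin.lt_def] at hkl
  omega

lemma chain_to_S0 (α β : List ℕ) (hα : IsComposition α) (hβ : IsComposition β)
    (hsub : SubComp β α) (hN : 1 ≤ skewSize α β) :
    ∀ n (T : ℕ × ℕ → ℕ), wt α β T ≤ n → IsSIT α β T → T ≠ S0 α β →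
    ∃ (r : ℕ) (js : Fin r → ℕ) (Ts : Fin (r + 1) → ℕ × ℕ → ℕ),
      Ts 0 = T ∧ Ts (Fin.last r) = S0 α β ∧ (∀ k, IsSIT α β (Ts k)) ∧
      (∀ k l : Fin (r + 1), k < l → wt α β (Ts l) < wt α β (Ts k)) ∧
      (∀ m : Fin r, 1 ≤ js m ∧ js m ≤ skewSize α β - 1 ∧
        piOp .rdI α β (js m) (Ts m.succ) = Ts m.castSucc) := by
  intro n
  induction n with
  | zero =>
      intro T hwt hT hne
      obtain ⟨i, U, hi1, hi2, hU, hpi, hwtU⟩ := exists_step α β hα hβ hsub hN hT hne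
      omega
  | succ n ih =>
      intro T hwt hT hne
      obtain ⟨i, U, hi1, hi2, hU, hpi, hwtU⟩ := exists_step α β hα hβ hsub hN hT hne
      have hchainU : ∃ (r : ℕ) (js : Fin r → ℕ) (Ts : Fin (r + 1) → ℕ × ℕ → ℕ),
          Ts 0 = U ∧ Ts (Fin.last r) = S0 α β ∧ (∀ k, IsSIT α β (Ts k)) ∧
          (∀ k l : Fin (r + 1), k < l → wt α β (Ts l) < wt α β (Ts k)) ∧
          (∀ m : Fin r, 1 ≤ js m ∧ js m ≤ skewSize α β - 1 ∧
            piOp .rdI α β (js m) (Ts m.succ) = Ts m.castSucc) := by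
        by_cases hUS0 : U = S0 α β
        · obtain ⟨r, js, Ts, h1, h2, h3, h4, h5⟩ := trivial_chain α β U hU
          exact ⟨r, js, Ts, h1, by rw [h2, hUS0], h3, h4, h5⟩
        · exact ih U (by omega) hU hUS0
      obtain ⟨r, js, Ts, hTs0, hTslast, hTsSIT, hdec, hjs⟩ := hchainU
      refine ⟨r + 1, Fin.cons i js, Fin.cons T Ts, Fin.cons_zero _ _, ?_, ?_, ?_, ?_⟩
      · rw [← Fin.succ_last, Fin.cons_succ]
        exact hTslast
      · intro k
        rcases eq_or_ne k 0 with rfl | hk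
        · rw [Fin.cons_zero]; exact hT
        · obtain ⟨k0, rfl⟩ := Fin.eq_succ_of_ne_zero hk
          rw [Fin.cons_succ]; exact hTsSIT k0
      · intro k l hkl
        have hl : l ≠ 0 := Fin.pos_iff_ne_zero.mp (lt_of_le_of_lt (Fin.zero_le k) hkl)
        obtain ⟨l0, rfl⟩ := Fin.eq_succ_of_ne_zero hl
        rcases eq_or_ne k 0 with rfl | hk
        · rw [Fin.cons_zero, Fin.cons_succ]
          rcases eq_or_ne l0 0 with rfl | hl0
          · rw [hTs0]; omega
          · have h0 : (0 : Fin (r + 1)) < l0 := Fin.pos_of_ne_zero hl0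
            have := hdec 0 l0 h0
            rw [hTs0] at this
            omega
        · obtain ⟨k0, rfl⟩ := Fin.eq_succ_of_ne_zero hk
          rw [Fin.cons_succ, Fin.cons_succ]
          exact hdec k0 l0 (by rwa [Fin.succ_lt_succ_iff] at hkl)
      · intro m
        rcases eq_or_ne m 0 with rfl | hm
        · refine ⟨?_, ?_, ?_⟩
          · rw [Fin.cons_zero]; exact hi1
          · rw [Fin.cons_zero]; exact hi2
          · rw [Fin.cons_zero, Fin.castSucc_zero, Fin.cons_zero]
            have : (0 : Fin (r + 1)).succ = Fin.succ 0 := rfl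
            rw [Fin.cons_succ, hTs0]
            exact hpi
        · obtain ⟨m0, rfl⟩ := Fin.eq_succ_of_ne_zero hm
          refine ⟨?_, ?_, ?_⟩
          · rw [Fin.cons_succ]; exact (hjs m0).1
          · rw [Fin.cons_succ]; exact (hjs m0).2.1
          · rw [Fin.cons_succ, Fin.cons_succ, ← Fin.succ_castSucc, Fin.cons_succ]
            exact (hjs m0).2.2

lemma reach_S0 (α β : List ℕ) (hα : IsComposition α) (hβ : IsComposition β)
    (hsub : SubComp β α) (hN : 1 ≤ skewSize α β) :
    ∀ n (T : ℕ × ℕ → ℕ), wt α β T ≤ n → IsSIT α β T → reach .rdI α β (S0 α β) T := by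
  intro n
  induction n with
  | zero =>
      intro T hwt hT
      by_cases hne : T = S0 α β
      · subst hne; exact Relation.ReflTransGen.refl
      · obtain ⟨i, U, hi1, hi2, hU, hpi, hwtU⟩ := exists_step α β hα hβ hsub hN hT hne
        omega
  | succ n ih =>
      intro T hwt hT
      by_cases hne : T = S0 α β
      · subst hne; exact Relation.ReflTransGen.refl
      · obtain ⟨i, U, hi1, hi2, hU, hpi, hwtU⟩ := exists_step α β hα hβ hsub hN hT hne
        exact Relation.ReflTransGen.tail (ih U (by omega) hU) ⟨hT, i, hi1, hi2, hpi⟩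

/-- every tableau in `SIT(α/β)` is reachable from `S^0_{α/β}` by a saturated
chain of `rdI`-operators; in particular `S^0_{α/β}` is the unique minimal element of the
skew immaculate Hecke poset. -/
theorem skew_S0_unique_minimal (α β : List ℕ)
    (hα : IsComposition α) (hβ : IsComposition β) (hsub : SubComp β α)
    (hN : 1 ≤ skewSize α β) :
    IsSIT α β (S0 α β) ∧
    (∀ T, IsSIT α β T → T ≠ S0 α β →
      ∃ (r : ℕ) (js : Fin r → ℕ) (Ts : Fin (r + 1) → ℕ × ℕ → ℕ),
        Ts 0 = T ∧ Ts (Fin.last r) = S0 α β ∧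
        (∀ i, IsSIT α β (Ts i)) ∧ Function.Injective Ts ∧
        (∀ i : Fin r, 1 ≤ js i ∧ js i ≤ skewSize α β - 1 ∧
          piOp .rdI α β (js i) (Ts i.succ) = Ts i.castSucc)) ∧
    (∀ T, IsSIT α β T → reach .rdI α β (S0 α β) T) := by
  refine ⟨S0_IsSIT α β hα hβ hsub, ?_, ?_⟩
  · intro T hT hne
    obtain ⟨r, js, Ts, h1, h2, h3, h4, h5⟩ :=
      chain_to_S0 α β hα hβ hsub hN (wt α β T) T le_rfl hT hne
    refine ⟨r, js, Ts, h1, h2, h3, ?_, h5⟩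
    intro a b hab
    by_contra hne2
    rcases Fin.lt_or_lt_of_ne hne2 with h | h
    · have := h4 a b h; rw [hab] at this; omega
    · have := h4 b a h; rw [hab] at this; omega
  · intro T hT
    exact reach_S0 α β hα hβ hsub hN (wt α β T) T le_rfl hT


end ImmaculateSkew
end
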